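/- Let K be an algebraically closed field of characteristic p > 0 with p ≠ 3. Let k, l, i be integers with k < l < 2k − 9, p | l − k and i > 1, and let a, b ∈ K with a ≠ 0. Then the parametrization (t^3, t^k + t^l + a·t^{l+3} + b·t^{l+3i}) is A-equivalent to (t^3, t^k + t^l + a·t^{l+3}). -/

import Mathlib

open PowerSeries

variable {K : Type*} [Field K]

/-- The coefficient of `x^i y^j` in a formal power series in two variables. -/
noncomputable def mvCoeff (f : MvPowerSeries (Fin 2) K) (p : ℕ × ℕ) : K :=
  MvPowerSeries.coeff (Finsupp.single (0 : Fin 2) p.1 + Finsupp.single (1 : Fin 2) p.2) f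

/-- Substitution of a pair of power series (of positive order) into a formal power
series in two variables; this realizes the algebra homomorphism
`ψ : K[[x,y]] → K[[t]]`, `x ↦ x(t)`, `y ↦ y(t)` associated to a parametrization. -/
noncomputable def substPair (x y : PowerSeries K) (f : MvPowerSeries (Fin 2) K) :
    PowerSeries K :=
  PowerSeries.mk fun n => ∑ p ∈ Finset.range (n + 1) ×ˢ Finset.range (n + 1),
    mvCoeff f p * PowerSeries.coeff n (x ^ p.1 * y ^ p.2)

/-- Two parametrizations `(x(t), y(t))` and `(x̄(t), ȳ(t))` are `𝒜`-equivalent if the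
associated homomorphisms `ψ, φ : K[[x,y]] → K[[t]]` satisfy `φ = r ∘ ψ ∘ l` for some
`K`-algebra automorphism `l` of `K[[x,y]]` and some `K`-algebra automorphism `r` of
`K[[t]]`. -/
def AEquiv (ψ φ : PowerSeries K × PowerSeries K) : Prop :=
  ∃ (l : MvPowerSeries (Fin 2) K ≃ₐ[K] MvPowerSeries (Fin 2) K)
    (r : PowerSeries K ≃ₐ[K] PowerSeries K),
    ∀ f : MvPowerSeries (Fin 2) K,
      substPair φ.1 φ.2 f = r (substPair ψ.1 ψ.2 (l f))

/-- The image `K[[x(t),y(t)]] ⊆ K[[t]]` of a parametrization, as a `K`-submodule. -/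
noncomputable def imageSubmodule (x y : PowerSeries K) : Submodule K (PowerSeries K) :=
  Submodule.span K (Set.range (substPair x y))

/-- A parametrization is primitive if `δ = dim_K K[[t]]/K[[x(t),y(t)]]` is finite. -/
def IsPrimitive (x y : PowerSeries K) : Prop :=
  Module.Finite K (PowerSeries K ⧸ imageSubmodule x y)

/-- The delta invariant `δ(ψ) = dim_K K[[t]]/K[[x(t),y(t)]]`. -/
noncomputable def deltaInv (x y : PowerSeries K) : ℕ :=
  Module.finrank K (PowerSeries K ⧸ imageSubmodule x y)

/-- The semigroup of values `Γ(ψ) = { ord_t h : h ∈ K[[x(t),y(t)]], h ≠ 0 }`. -/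
noncomputable def valueSemigroup (x y : PowerSeries K) : Set ℕ :=
  {n : ℕ | ∃ f : MvPowerSeries (Fin 2) K,
    substPair x y f ≠ 0 ∧ (substPair x y f).order = (n : ℕ∞)}

/-!
Write `l = k + m`. Since `p ∣ m`, the polynomial `F(s) = s^m + a·x·s^(m+3) - (1 + a·x + b·x^i)`
over `K[[x]]` has derivative `3a·x·s^(m+2)`, of order exactly one at a unit `s`. Newton's method,
in the form "`F(s₀) ≡ 0 mod x³` and `F'(s₀) = x·unit` give a root `s ≡ s₀ mod x²`", therefore
yields a root `s` with `s(0) = 1`, starting from `s₀ = 1 + c·x` for `c` a root of a quadratic with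
linear coefficient `3a ≠ 0`. With `S(t) = s(t³)`, the reparametrization `t ↦ t·S(t)` sends
`(t³, t^k + t^l + a·t^(l+3))` to `(χ(t³), S^k·(t^k + t^l + a·t^(l+3) + b·t^(l+3i)))`, where
`χ(x) = x·s(x)³`: the image of the other parametrization under `(x, y) ↦ (χ(x), y·s(x)^k)`.
-/

namespace MvPowerSeries

variable {σ R : Type*} [CommRing R]

noncomputable def substAlgEquiv {a b : σ → MvPowerSeries σ R} (ha : HasSubst a)
    (hb : HasSubst b) (hab : ∀ i, subst a (b i) = X i) (hba : ∀ i, subst b (a i) = X i) :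
    MvPowerSeries σ R ≃ₐ[R] MvPowerSeries σ R :=
  AlgEquiv.ofAlgHom (substAlgHom ha) (substAlgHom hb)
    (AlgHom.ext fun f => by simp [subst_comp_subst_apply hb ha, hab, subst_self])
    (AlgHom.ext fun f => by simp [subst_comp_subst_apply ha hb, hba, subst_self])

@[simp]
theorem substAlgEquiv_apply {a b : σ → MvPowerSeries σ R} (ha : HasSubst a)
    (hb : HasSubst b) (hab : ∀ i, subst a (b i) = X i) (hba : ∀ i, subst b (a i) = X i)
    (f : MvPowerSeries σ R) : substAlgEquiv ha hb hab hba f = subst a f :=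
  substAlgHom_apply ha f

end MvPowerSeries

namespace PowerSeries

variable {R : Type*} [CommRing R]

noncomputable def substAlgEquiv {a : R⟦X⟧} (ha : constantCoeff a = 0)
    (ha' : IsUnit (coeff 1 a)) : R⟦X⟧ ≃ₐ[R] R⟦X⟧ :=
  have ha₁ := HasSubst.of_constantCoeff_zero' ha
  have hb₁ := HasSubst.substInvOfIsUnit a ha'
  AlgEquiv.ofAlgHom (substAlgHom ha₁) (substAlgHom hb₁)
    (AlgHom.ext fun f => by
      simp only [AlgHom.comp_apply, coe_substAlgHom, subst_comp_subst_apply hb₁ ha₁,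
        subst_substInvOfIsUnit_left a ha ha', X_subst, AlgHom.coe_id, id])
    (AlgHom.ext fun f => by
      simp only [AlgHom.comp_apply, coe_substAlgHom, subst_comp_subst_apply ha₁ hb₁,
        subst_substInvOfIsUnit_right a ha ha', X_subst, AlgHom.coe_id, id])

@[simp]
theorem substAlgEquiv_apply {a : R⟦X⟧} (ha : constantCoeff a = 0) (ha' : IsUnit (coeff 1 a))
    (f : R⟦X⟧) : substAlgEquiv ha ha' f = f.subst a :=
  congrFun (coe_substAlgHom (HasSubst.of_constantCoeff_zero' ha)) f

theorem subst_one {τ : Type*} (a : MvPowerSeries τ R) : (1 : R⟦X⟧).subst a = 1 := by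
  simpa using subst_C (a := a) (1 : R)

theorem toMvPowerSeries_subst {σ : Type*} {f g : R⟦X⟧} (hg : constantCoeff g = 0) (i : σ) :
    toMvPowerSeries i (f.subst g) = f.subst (g.toMvPowerSeries i) := by
  rw [toMvPowerSeries_eq_subst, toMvPowerSeries_eq_subst,
    subst_comp_subst_apply (HasSubst.of_constantCoeff_zero' hg) (HasSubst.X (S := R) i)]

theorem hasSubst_pair {u v : R⟦X⟧} (hu : constantCoeff u = 0) (hv : constantCoeff v = 0) :
    MvPowerSeries.HasSubst ![u, v] :=
  MvPowerSeries.hasSubst_of_constantCoeff_zero fun j => by fin_cases j <;> assumption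

theorem coeff_pow_mul_pow_eq_zero_of_lt {x y : R⟦X⟧} (hx : constantCoeff x = 0)
    (hy : constantCoeff y = 0) {i j n : ℕ} (h : n < i + j) : coeff n (x ^ i * y ^ j) = 0 := by
  have hdvd : X ^ (i + j) ∣ x ^ i * y ^ j := by
    rw [pow_add]
    exact mul_dvd_mul (pow_dvd_pow_of_dvd (X_dvd_iff.mpr hx) i)
      (pow_dvd_pow_of_dvd (X_dvd_iff.mpr hy) j)
  exact X_pow_dvd_iff.mp hdvd n h

theorem coeff_one_add_C_mul_X_pow (c : R) (n j : ℕ) :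
    coeff j ((1 + C c * X : R⟦X⟧) ^ n) = n.choose j * c ^ j := by
  have h : (1 + C c * X : R⟦X⟧) ^ n =
      rescale c (((1 + Polynomial.X) ^ n : Polynomial R) : R⟦X⟧) := by
    simp [map_pow, rescale_X]
  rw [h, coeff_rescale, Polynomial.coeff_coe, Polynomial.coeff_one_add_X_pow, mul_comm]

theorem eq_zero_of_forall_X_pow_dvd {f : R⟦X⟧} (hf : ∀ N, X ^ N ∣ f) : f = 0 := by
  ext n
  simpa using X_pow_dvd_iff.mp (hf (n + 1)) n n.lt_succ_self

theorem exists_forall_X_pow_dvd_sub (S : ℕ → R⟦X⟧) (hS : ∀ N, X ^ N ∣ S (N + 1) - S N) :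
    ∃ s, ∀ N, X ^ N ∣ s - S N := by
  have hchain (N M : ℕ) (hNM : N ≤ M) : X ^ N ∣ S M - S N := by
    induction M, hNM using Nat.le_induction with
    | base => simp
    | succ M hNM ih =>
      rw [← sub_add_sub_cancel]
      exact dvd_add ((pow_dvd_pow X hNM).trans (hS M)) ih
  refine ⟨mk fun j => coeff j (S (j + 1)), fun N => X_pow_dvd_iff.mpr fun j hj => ?_⟩
  rw [map_sub, coeff_mk, sub_eq_zero, eq_comm, ← sub_eq_zero, ← map_sub]
  exact X_pow_dvd_iff.mp (hchain (j + 1) N hj) j j.lt_succ_self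

open Polynomial in
/-- One Newton step: with `F(s) = X^(2e+1+n)·g` and `F'(s) = X^e·v`, the correction
`-(g₀/v₀)·X^(e+1+n)` kills the next coefficient, and its square is divisible by `X^(2e+2+n)`. -/
theorem exists_X_pow_dvd_eval_succ {F : R⟦X⟧[X]} {s₀ u : R⟦X⟧} {e n : ℕ}
    (hu : IsUnit (constantCoeff u)) (hF' : F.derivative.eval s₀ = X ^ e * u)
    {s : R⟦X⟧} (hs : X ^ (e + 1) ∣ s - s₀) (hFs : X ^ (2 * e + 1 + n) ∣ F.eval s) :
    ∃ s', X ^ (e + 1 + n) ∣ s' - s ∧ X ^ (2 * e + 1 + (n + 1)) ∣ F.eval s' := by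
  obtain ⟨v, hv⟩ : ∃ v, F.derivative.eval s = X ^ e * (u + X * v) := by
    obtain ⟨w, hw⟩ := hs.trans (sub_dvd_eval_sub s s₀ F.derivative)
    exact ⟨w, by rw [mul_add, ← mul_assoc, ← pow_succ, ← hw, ← hF']; ring⟩
  have hv₀ : IsUnit (constantCoeff (u + X * v)) := by simpa using hu
  obtain ⟨g, hg⟩ := hFs
  set δ : R⟦X⟧ := -(C (constantCoeff g * ↑hv₀.unit⁻¹) * X ^ (e + 1 + n))
  obtain ⟨k, hk⟩ := binomExpansion F s δ
  refine ⟨s + δ, by simp [δ], ?_⟩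
  have hlin : X ∣ g - C (constantCoeff g * ↑hv₀.unit⁻¹) * (u + X * v) := by
    rw [X_dvd_iff, map_sub, map_mul, constantCoeff_C, mul_assoc, IsUnit.val_inv_mul, mul_one,
      sub_self]
  have hsq : X ^ (2 * e + 1 + (n + 1)) ∣ δ ^ 2 := by
    rw [neg_sq, mul_pow, ← pow_mul]
    exact Dvd.dvd.mul_left (pow_dvd_pow X (by omega)) _
  rw [hk, hv, hg]
  refine dvd_add ?_ (hsq.mul_left k)
  convert mul_dvd_mul_left (X ^ (2 * e + 1 + n)) hlin using 1
  · ring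
  · simp only [δ]
    ring

open Polynomial in
theorem exists_eval_eq_zero_of_derivative_eq_X_pow_mul {F : R⟦X⟧[X]} {s₀ u : R⟦X⟧} {e : ℕ}
    (hu : IsUnit (constantCoeff u)) (hF' : F.derivative.eval s₀ = X ^ e * u)
    (hF : X ^ (2 * e + 1) ∣ F.eval s₀) :
    ∃ s, X ^ (e + 1) ∣ s - s₀ ∧ F.eval s = 0 := by
  let P (n : ℕ) (s : R⟦X⟧) : Prop := X ^ (e + 1) ∣ s - s₀ ∧ X ^ (2 * e + 1 + n) ∣ F.eval s
  have hstep (n : ℕ) (s : R⟦X⟧) (hs : P n s) :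
      ∃ s', P (n + 1) s' ∧ X ^ (e + 1 + n) ∣ s' - s := by
    obtain ⟨s', hs's, hFs'⟩ := exists_X_pow_dvd_eval_succ hu hF' hs.1 hs.2
    refine ⟨s', ⟨?_, hFs'⟩, hs's⟩
    rw [← sub_add_sub_cancel s' s]
    exact dvd_add ((pow_dvd_pow X (by omega)).trans hs's) hs.1
  choose! next hnext using hstep
  let S (n : ℕ) : R⟦X⟧ := Nat.rec s₀ next n
  have hS (n : ℕ) : P n (S n) := by
    induction n with
    | zero => exact ⟨by simp [S], hF⟩
    | succ n ih => exact (hnext n (S n) ih).1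
  obtain ⟨s, hs⟩ := exists_forall_X_pow_dvd_sub S fun n =>
    (pow_dvd_pow X (by omega)).trans (hnext n (S n) (hS n)).2
  refine ⟨s, ?_, eq_zero_of_forall_X_pow_dvd fun n => ?_⟩
  · rw [← sub_add_sub_cancel s (S (e + 1))]
    exact dvd_add (hs _) (hS (e + 1)).1
  · rw [← sub_add_cancel (F.eval s) (F.eval (S n))]
    exact dvd_add ((hs n).trans (sub_dvd_eval_sub s (S n) F))
      ((pow_dvd_pow X (by omega)).trans (hS n).2)

end PowerSeries

section Triangular

variable {R : Type*} [CommRing R]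

noncomputable def triangularSubst (χ U : R⟦X⟧) : Fin 2 → MvPowerSeries (Fin 2) R :=
  ![χ.toMvPowerSeries 0, MvPowerSeries.X 1 * U.toMvPowerSeries 0]

theorem hasSubst_triangularSubst {χ : R⟦X⟧} (hχ : constantCoeff χ = 0) (U : R⟦X⟧) :
    MvPowerSeries.HasSubst (triangularSubst χ U) := by
  refine MvPowerSeries.hasSubst_of_constantCoeff_zero fun j => ?_
  fin_cases j <;> simp [triangularSubst, toMvPowerSeries_apply]
  exact hχ

theorem subst_triangularSubst {τ : Type*} {a : Fin 2 → MvPowerSeries τ R}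
    (ha : MvPowerSeries.HasSubst a) (χ U : R⟦X⟧) :
    (fun j => MvPowerSeries.subst a (triangularSubst χ U j)) =
      ![χ.subst (a 0), a 1 * U.subst (a 0)] := by
  ext1 j
  fin_cases j <;>
    simp [triangularSubst, subst_toMvPowerSeries ha, MvPowerSeries.subst_mul ha,
      MvPowerSeries.subst_X ha]

theorem subst_triangularSubst_triangularSubst {χ : R⟦X⟧} (hχ : constantCoeff χ = 0)
    (U χ' U' : R⟦X⟧) :
    (fun j => MvPowerSeries.subst (triangularSubst χ U) (triangularSubst χ' U' j)) =
      triangularSubst (χ'.subst χ) (U * U'.subst χ) := by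
  rw [subst_triangularSubst (hasSubst_triangularSubst hχ U)]
  simp [triangularSubst, toMvPowerSeries_subst hχ, mul_assoc]

theorem triangularSubst_X_one : triangularSubst (X : R⟦X⟧) 1 = MvPowerSeries.X := by
  ext1 j
  fin_cases j <;> simp [triangularSubst]

theorem exists_algEquiv_eq_subst_triangularSubst {χ : R⟦X⟧} (hχ : constantCoeff χ = 0)
    (hχ' : IsUnit (coeff 1 χ)) {U : R⟦X⟧} (hU : IsUnit U) :
    ∃ l : MvPowerSeries (Fin 2) R ≃ₐ[R] MvPowerSeries (Fin 2) R,
      ∀ f, l f = MvPowerSeries.subst (triangularSubst χ U) f := by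
  set χ' := χ.substInvOfIsUnit hχ'
  have hχ'₀ : constantCoeff χ' = 0 := constantCoeff_substInvOfIsUnit χ hχ'
  have hV : IsUnit (U.subst χ') := by
    simpa [coe_substAlgHom] using hU.map (substAlgHom (HasSubst.of_constantCoeff_zero' hχ'₀))
  set U' : R⟦X⟧ := ↑hV.unit⁻¹
  have hU'V : U' * U.subst χ' = 1 := hV.val_inv_mul
  have hUU' : U * U'.subst χ = 1 := by
    have h := congrArg (subst χ) hU'V
    rw [subst_mul (HasSubst.of_constantCoeff_zero' hχ),
      subst_comp_subst_apply (HasSubst.of_constantCoeff_zero' hχ'₀)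
        (HasSubst.of_constantCoeff_zero' hχ),
      subst_substInvOfIsUnit_left χ hχ hχ', X_subst, subst_one, mul_comm] at h
    exact h
  refine ⟨MvPowerSeries.substAlgEquiv (hasSubst_triangularSubst hχ U)
    (hasSubst_triangularSubst hχ'₀ U') (fun j => ?_) (fun j => ?_), fun f => by simp⟩
  · rw [congrFun (subst_triangularSubst_triangularSubst hχ U χ' U') j,
      subst_substInvOfIsUnit_left χ hχ hχ', hUU', triangularSubst_X_one]
  · rw [congrFun (subst_triangularSubst_triangularSubst hχ'₀ U' χ U) j,
      subst_substInvOfIsUnit_right χ hχ hχ', hU'V, triangularSubst_X_one]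

end Triangular

theorem substPair_eq_subst {x y : K⟦X⟧} (hx : constantCoeff x = 0)
    (hy : constantCoeff y = 0) (f : MvPowerSeries (Fin 2) K) :
    substPair x y f = MvPowerSeries.subst ![x, y] f := by
  ext n
  let e : ℕ × ℕ ≃ (Fin 2 →₀ ℕ) := (finTwoArrowEquiv ℕ).symm.trans Finsupp.equivFunOnFinite.symm
  have he (p : ℕ × ℕ) : e p = Finsupp.single 0 p.1 + Finsupp.single 1 p.2 := by
    ext j
    fin_cases j <;> simp [e]
  have hterm (p : ℕ × ℕ) : MvPowerSeries.coeff (e p) f •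
      MvPowerSeries.coeff (Finsupp.single () n) ((e p).prod fun j d => ![x, y] j ^ d) =
      mvCoeff f p * coeff n (x ^ p.1 * y ^ p.2) := by
    simp [he, mvCoeff, coeff_def (s := Finsupp.single () n)]
  rw [substPair, coeff_mk, coeff_def (s := Finsupp.single () n) (by simp),
    MvPowerSeries.coeff_subst (hasSubst_pair hx hy), ← finsum_comp_equiv e, finsum_congr hterm,
    finsum_eq_sum_of_support_subset _ (s := Finset.range (n + 1) ×ˢ Finset.range (n + 1))]
  · rfl
  · intro p hp
    simp only [Finset.coe_product, Finset.coe_range, Set.mem_prod, Set.mem_Iio]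
    by_contra hlt
    exact hp (by simp [coeff_pow_mul_pow_eq_zero_of_lt hx hy (show n < p.1 + p.2 by omega)])

theorem aEquiv_of_subst_eq {x y x' y' σ χ U : K⟦X⟧} (hx : constantCoeff x = 0)
    (hy : constantCoeff y = 0) (hx' : constantCoeff x' = 0) (hy' : constantCoeff y' = 0)
    (hσ : constantCoeff σ = 0) (hσ' : IsUnit (coeff 1 σ)) (hχ : constantCoeff χ = 0)
    (hχ' : IsUnit (coeff 1 χ)) (hU : IsUnit U) (hxσ : x'.subst σ = χ.subst x)
    (hyσ : y'.subst σ = y * U.subst x) : AEquiv (x, y) (x', y') := by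
  obtain ⟨l, hl⟩ := exists_algEquiv_eq_subst_triangularSubst hχ hχ' hU
  refine ⟨l, (substAlgEquiv hσ hσ').symm, fun f => ?_⟩
  rw [AlgEquiv.eq_symm_apply, substAlgEquiv_apply, hl, substPair_eq_subst hx' hy',
    substPair_eq_subst hx hy, subst_def,
    MvPowerSeries.subst_comp_subst_apply (hasSubst_pair hx' hy')
      (HasSubst.of_constantCoeff_zero' hσ).const,
    MvPowerSeries.subst_comp_subst_apply (hasSubst_triangularSubst hχ U) (hasSubst_pair hx hy),
    subst_triangularSubst (hasSubst_pair hx hy)]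
  congr 1
  ext1 j
  fin_cases j <;> simp [← subst_def, hxσ, hyσ]

theorem IsAlgClosed.exists_mul_sq_add_mul_eq {k : Type*} [Field k] [IsAlgClosed k] (A : k)
    {B : k} (hB : B ≠ 0) (D : k) : ∃ c, A * c ^ 2 + B * c = D := by
  let q : Polynomial k :=
    Polynomial.C A * Polynomial.X ^ 2 + Polynomial.C B * Polynomial.X - Polynomial.C D
  have hq₁ : q.coeff 1 = B := by simp [q]
  have hdeg : q.degree ≠ 0 := by
    intro h
    rw [Polynomial.coeff_eq_zero_of_natDegree_lt
      (Polynomial.natDegree_eq_zero_iff_degree_le_zero.mpr h.le ▸ one_pos)] at hq₁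
    exact hB hq₁.symm
  obtain ⟨c, hc⟩ := IsAlgClosed.exists_root q hdeg
  exact ⟨c, by simpa [q, sub_eq_zero] using hc⟩

theorem exists_pow_add_C_mul_X_mul_pow_eq [IsAlgClosed K] {m r : ℕ} (hm : (m : K) = 0)
    (hr : (r : K) ≠ 0) {a : K} (ha : a ≠ 0) {w : K⟦X⟧} (hw₀ : constantCoeff w = 1)
    (hw₁ : coeff 1 w = a) :
    ∃ s : K⟦X⟧, constantCoeff s = 1 ∧ s ^ m + C a * X * s ^ (m + r) = w := by
  let F : Polynomial K⟦X⟧ :=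
    Polynomial.X ^ m + Polynomial.C (C a * X) * Polynomial.X ^ (m + r) - Polynomial.C w
  have hF (s : K⟦X⟧) : F.eval s = s ^ m + C a * X * s ^ (m + r) - w := by simp [F]
  have hmK : (m : K⟦X⟧) = 0 := by rw [← map_natCast C, hm, map_zero]
  have hF' (s : K⟦X⟧) : F.derivative.eval s = X ^ 1 * (C (r * a) * s ^ (m + r - 1)) := by
    simp [F, hmK, Polynomial.derivative_X_pow]
    ring
  -- `c` makes the `X²`-coefficient of `F(1 + c·X)` vanish; the lower ones vanish as `m = 0` in `K`.
  obtain ⟨c, hc⟩ := IsAlgClosed.exists_mul_sq_add_mul_eq (m.choose 2 : K) (mul_ne_zero hr ha)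
    (coeff 2 w)
  set s₀ : K⟦X⟧ := 1 + C c * X
  have hs₀ : X ^ (2 * 1 + 1) ∣ F.eval s₀ := by
    refine X_pow_dvd_iff.mpr fun j hj => ?_
    interval_cases j <;>
      simp [hF, s₀, coeff_one_add_C_mul_X_pow, mul_assoc, coeff_succ_X_mul, hw₀, hw₁, hm]
    linear_combination hc
  obtain ⟨s, hss₀, hFs⟩ := exists_eval_eq_zero_of_derivative_eq_X_pow_mul
    (by simpa [s₀] using mul_ne_zero hr ha) (hF' s₀) hs₀
  refine ⟨s, ?_, sub_eq_zero.mp (hF s ▸ hFs)⟩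
  have h := X_dvd_iff.mp ((dvd_pow_self X (Nat.succ_ne_zero 1)).trans hss₀)
  simpa [s₀, sub_eq_zero] using h

theorem statement_5_general [IsAlgClosed K] (p : ℕ) [CharP K p] (hp3 : p ≠ 3)
    (k l i : ℕ) (hkl : k < l) (hl : l + 9 < 2 * k) (hdvd : p ∣ l - k) (hi : 1 < i)
    (a b : K) (ha : a ≠ 0) :
    AEquiv ((PowerSeries.X : PowerSeries K) ^ 3,
        PowerSeries.X ^ k + PowerSeries.X ^ l + PowerSeries.C a * PowerSeries.X ^ (l + 3)
          + PowerSeries.C b * PowerSeries.X ^ (l + 3 * i))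
      ((PowerSeries.X : PowerSeries K) ^ 3,
        PowerSeries.X ^ k + PowerSeries.X ^ l
          + PowerSeries.C a * PowerSeries.X ^ (l + 3)) := by
  obtain ⟨m, rfl⟩ : ∃ m, l = k + m := ⟨l - k, by omega⟩
  have hk : k ≠ 0 := by omega
  have h3 : ((3 : ℕ) : K) ≠ 0 := fun h => by
    rcases (Nat.dvd_prime Nat.prime_three).mp ((CharP.cast_eq_zero_iff K p 3).mp h) with h1 | h1
    exacts [CharP.char_ne_one K p h1, hp3 h1]
  have hm : (m : K) = 0 := (CharP.cast_eq_zero_iff K p m).mpr (by simpa using hdvd)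
  obtain ⟨s, hs₀, hs⟩ := exists_pow_add_C_mul_X_mul_pow_eq hm h3 ha
    (w := 1 + C a * X + C b * X ^ i) (by simp; omega) (by simp; omega)
  have hX3 : HasSubst (X ^ 3 : K⟦X⟧) := HasSubst.of_constantCoeff_zero' (by simp)
  set S := s.subst (X ^ 3 : K⟦X⟧) with hSdef
  have hS : S ^ m + C a * X ^ 3 * S ^ (m + 3) = 1 + C a * X ^ 3 + C b * X ^ (3 * i) := by
    have h := congrArg (subst (X ^ 3 : K⟦X⟧)) hs
    simpa [subst_add hX3, subst_mul hX3, subst_pow hX3, subst_X hX3, subst_one, ← C_apply,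
      ← pow_mul] using h
  have hσ : HasSubst (X * S) := HasSubst.of_constantCoeff_zero' (by simp)
  refine aEquiv_of_subst_eq (σ := X * S) (χ := X * s ^ 3) (U := s ^ k) (by simp) (by simp [hk])
    (by simp) (by simp [hk]) (by simp) (by simp [S, hs₀]) (by simp) (by simp [hs₀])
    ((isUnit_iff_constantCoeff.mpr (by simp [hs₀])).pow k) ?_ ?_
  · simp [subst_mul hX3, subst_pow hX3, subst_X hX3, subst_pow hσ, subst_X hσ, ← hSdef]
    ring
  · simp [subst_pow hX3, subst_mul hσ, subst_pow hσ, subst_X hσ, subst_add hσ, ← C_apply,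
      ← hSdef]
    linear_combination (X ^ (k + m) * S ^ k) * hS

/-- in characteristic `p > 0`, `p ≠ 3`, for `k < l < 2k − 9` with
`p ∣ l − k`, `i > 1` and `a ≠ 0`,
`(t³, t^k + t^l + a·t^{l+3} + b·t^{l+3i}) ∼_𝒜 (t³, t^k + t^l + a·t^{l+3})`. -/
theorem statement_5 [IsAlgClosed K] (p : ℕ) [CharP K p] (hp : 0 < p) (hp3 : p ≠ 3)
    (k l i : ℕ) (hkl : k < l) (hl : l + 9 < 2 * k) (hdvd : p ∣ l - k) (hi : 1 < i)
    (a b : K) (ha : a ≠ 0) :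
    AEquiv ((PowerSeries.X : PowerSeries K) ^ 3,
        PowerSeries.X ^ k + PowerSeries.X ^ l + PowerSeries.C a * PowerSeries.X ^ (l + 3)
          + PowerSeries.C b * PowerSeries.X ^ (l + 3 * i))
      ((PowerSeries.X : PowerSeries K) ^ 3,
        PowerSeries.X ^ k + PowerSeries.X ^ l
          + PowerSeries.C a * PowerSeries.X ^ (l + 3)) :=
  statement_5_general p hp3 k l i hkl hl hdvd hi a b ha
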